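/- In the overalgebra 𝐀 of the second type, with the classes of β indexed so that a₁ ∈ C_m, the relation β̃ = β⋆ ∪ ⋃_{r=1}^{m−1} ⋃_{n=1}^{N} (⋃_{ℓ∈𝒯_n} C_r^ℓ)² is a congruence of 𝐀, and it is the largest congruence θ of 𝐀 satisfying θ∩(B×B) = β (that is, β̃ = β̂). -/

import Mathlib

namespace Overalg

variable {A : Type*}

/-- `θ` is an equivalence relation on the whole type `A`, viewed as a set of pairs. -/
def IsEquivRel (θ : Set (A × A)) : Prop :=
  (∀ x : A, (x, x) ∈ θ) ∧ (∀ x y : A, (x, y) ∈ θ → (y, x) ∈ θ) ∧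
    (∀ x y z : A, (x, y) ∈ θ → (y, z) ∈ θ → (x, z) ∈ θ)

/-- `θ` is an equivalence relation on the subset `B` of `A`, viewed as a set of pairs. -/
def IsEquivOn (B : Set A) (θ : Set (A × A)) : Prop :=
  θ ⊆ B ×ˢ B ∧ (∀ x ∈ B, (x, x) ∈ θ) ∧ (∀ x y : A, (x, y) ∈ θ → (y, x) ∈ θ) ∧
    (∀ x y z : A, (x, y) ∈ θ → (y, z) ∈ θ → (x, z) ∈ θ)

/-- The clone of unary polynomials of the unary algebra `⟨A, F⟩`: the smallest set of
maps `A → A` containing `F`, the identity and all constants, closed under composition. -/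
inductive Pol1 (F : Set (A → A)) : (A → A) → Prop
  | base : ∀ f ∈ F, Pol1 F f
  | id : Pol1 F _root_.id
  | const : ∀ a : A, Pol1 F (fun _ => a)
  | comp : ∀ f g : A → A, Pol1 F f → Pol1 F g → Pol1 F (f ∘ g)

/-- A congruence of the unary algebra `⟨A, F⟩`. -/
def IsCon (F : Set (A → A)) (θ : Set (A × A)) : Prop :=
  IsEquivRel θ ∧ ∀ f ∈ F, ∀ p ∈ θ, (f p.1, f p.2) ∈ θ

end Overalg

namespace Overalg

/-- The data of an *overalgebra of the second type*, built over a finite base algebra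
`𝐁 = ⟨B 0, F⟩` and the congruence `β = Cg^𝐁((a 1, b 1), …, (a (K-1), b (K-1)))`.
The universe is `A = B 0 ∪ B 1 ∪ ⋯ ∪ B (u*K)`, a chain of copies of `B 0` glued at
tie-points as in the paper; `π j : B 0 → B j` are bijections with inverses `σ j`;
`T 1 | ⋯ | T N` is a partition of the multiples of `K` in `{0, …, u*K}`, and the maps
`e j` are the retractions described in the construction. -/
structure OvII (A : Type*) where
  K : ℕ
  u : ℕ
  N : ℕ
  B : ℕ → Set A
  F : Set (A → A)
  a : ℕ → A
  b : ℕ → A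
  π : ℕ → A → A
  σ : ℕ → A → A
  T : ℕ → Set ℕ
  e : ℕ → A → A
  β : Set (A × A)
  hfin : Finite A
  hK : 2 ≤ K
  hu : 1 ≤ u
  /-- `A = B 0 ∪ ⋯ ∪ B (u*K)` -/
  hA : ∀ x : A, ∃ j ≤ u * K, x ∈ B j
  /-- the base operations map `B 0` into itself -/
  hF : ∀ f ∈ F, Set.MapsTo f (B 0) (B 0)
  /-- the generating pairs lie in `B 0` -/
  hab : ∀ i, 1 ≤ i → i ≤ K - 1 → a i ∈ B 0 ∧ b i ∈ B 0
  /-- `π 0` is the identity -/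
  hπ0 : ∀ x : A, π 0 x = x
  /-- `π j` is a bijection of `B 0` onto `B j` -/
  hπ : ∀ j ≤ u * K, Set.BijOn (π j) (B 0) (B j)
  /-- `σ j` inverts `π j` on `B 0` -/
  hσ : ∀ j ≤ u * K, ∀ c ∈ B 0, σ j (π j c) = c
  /-- `β` is the smallest congruence of `𝐁` containing the pairs `(a i, b i)` -/
  hβ : IsLeast {γ : Set (A × A) |
      (IsEquivOn (B 0) γ ∧ ∀ f ∈ F, ∀ p ∈ γ, (f p.1, f p.2) ∈ γ) ∧
      ∀ i, 1 ≤ i → i ≤ K - 1 → (a i, b i) ∈ γ} β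
  /-- adjacent intersections at a multiple of `K`:
  `B ℓ ∩ B (ℓ+1) = {a₁^ℓ} = {a₁^{ℓ+1}}` -/
  hadj0 : ∀ j < u * K, j % K = 0 →
    B j ∩ B (j + 1) = {π j (a 1)} ∧ π j (a 1) = π (j + 1) (a 1)
  /-- adjacent intersections in the middle of a segment:
  `B (ℓ+i) ∩ B (ℓ+i+1) = {b_i^{ℓ+i}} = {a_{i+1}^{ℓ+i+1}}` for `1 ≤ i ≤ K-2` -/
  hadjm : ∀ j < u * K, 1 ≤ j % K → j % K ≤ K - 2 →
    B j ∩ B (j + 1) = {π j (b (j % K))} ∧ π j (b (j % K)) = π (j + 1) (a (j % K + 1))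
  /-- adjacent intersections at the end of a segment:
  `B (ℓ+K-1) ∩ B (ℓ+K) = {b_{K-1}^{ℓ+K-1}} = {a₁^{ℓ+K}}` -/
  hadjl : ∀ j < u * K, j % K = K - 1 →
    B j ∩ B (j + 1) = {π j (b (K - 1))} ∧ π j (b (K - 1)) = π (j + 1) (a 1)
  /-- the triple meets: `B (ℓ-1) ∩ B (ℓ+1) = {a₁^ℓ}` for `ℓ` a positive multiple
  of `K` with `ℓ < u*K` -/
  htriple : ∀ j, 0 < j → j + 1 ≤ u * K → j % K = 0 → B (j - 1) ∩ B (j + 1) = {π j (a 1)}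
  /-- all other intersections are empty -/
  hempty : ∀ i j, i ≤ u * K → j ≤ u * K → i + 2 ≤ j →
    ¬(j = i + 2 ∧ (i + 1) % K = 0) → B i ∩ B j = ∅
  /-- each block `T n` consists of multiples of `K` that are at most `u*K` -/
  hT1 : ∀ n, 1 ≤ n → n ≤ N → T n ⊆ {j : ℕ | j ≤ u * K ∧ K ∣ j}
  /-- the blocks `T 1, …, T N` partition `{0, K, 2K, …, uK}` -/
  hT2 : ∀ j ≤ u * K, K ∣ j → ∃! n, 1 ≤ n ∧ n ≤ N ∧ j ∈ T n
  /-- for `ℓ` a multiple of `K`: `e ℓ` maps `B j` onto `B ℓ` via `S_{j,ℓ}` when `j` is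
  in the same block of the partition as `ℓ` … -/
  heK1 : ∀ n, 1 ≤ n → n ≤ N → ∀ ℓ ∈ T n, ∀ j ∈ T n, ∀ c ∈ B 0, e ℓ (π j c) = π ℓ c
  /-- … and sends everything else to the tie-point `a₁^ℓ` -/
  heK2 : ∀ n, 1 ≤ n → n ≤ N → ∀ ℓ ∈ T n, ∀ x : A, (∀ j ∈ T n, x ∉ B j) →
    e ℓ x = π ℓ (a 1)
  /-- for `j = ℓ + i` with `1 ≤ i < K`: `e j` is the identity on `B j` … -/
  heM1 : ∀ j ≤ u * K, j % K ≠ 0 → ∀ x ∈ B j, e j x = x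
  /-- … maps everything to the left of `B j` to the left tie-point `a_i^j` … -/
  heM2 : ∀ j ≤ u * K, j % K ≠ 0 → ∀ j' < j, ∀ x ∈ B j', x ∉ B j →
    e j x = π j (a (j % K))
  /-- … and everything to the right of `B j` to the right tie-point `b_i^j` -/
  heM3 : ∀ j ≤ u * K, j % K ≠ 0 → ∀ j', j < j' → j' ≤ u * K → ∀ x ∈ B j', x ∉ B j →
    e j x = π j (b (j % K))

namespace OvII

variable {A : Type*} (O : OvII A)

/-- `q i j = S i j ∘ e i`; here `q i 0 = σ i ∘ e i` and `q 0 j = π j ∘ e 0`. -/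
def qi0 (i : ℕ) : A → A := fun x => O.σ i (O.e i x)

/-- `q 0 j = π j ∘ e 0`. -/
def q0j (j : ℕ) : A → A := fun x => O.π j (O.e 0 x)

/-- The operations of the overalgebra:
`F_A = {f ∘ e 0 : f ∈ F} ∪ {q i 0 : 0 ≤ i ≤ uK} ∪ {q 0 j : 1 ≤ j ≤ uK}`. -/
def FA : Set (A → A) :=
  {g | ∃ f ∈ O.F, g = f ∘ O.e 0} ∪ {g | ∃ i ≤ O.u * O.K, g = O.qi0 i} ∪
    {g | ∃ j, 1 ≤ j ∧ j ≤ O.u * O.K ∧ g = O.q0j j}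

/-- A congruence of the base algebra `𝐁 = ⟨B 0, F⟩`. -/
def ConB (θ : Set (A × A)) : Prop :=
  IsEquivOn (O.B 0) θ ∧ ∀ f ∈ O.F, ∀ p ∈ θ, (f p.1, f p.2) ∈ θ

/-- A tie-point `t j` of `B j`: `a₁^j` when `K ∣ j`, and `a_i^j` when `j = ℓ + i`,
`1 ≤ i < K`. -/
def tie (j : ℕ) : A := O.π j (O.a (if j % O.K = 0 then 1 else j % O.K))

/-- `β^j = {(π j x, π j y) : (x, y) ∈ β}`, the copy of `β` on `B j`. -/
def bj (j : ℕ) : Set (A × A) := {p | ∃ q ∈ O.β, p = (O.π j q.1, O.π j q.2)}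

/-- `t j / β^j`, the `β^j`-class of the tie-point of `B j`. -/
def tcls (j : ℕ) : Set A := {x | (O.tie j, x) ∈ O.bj j}

/-- `β⋆ = ⋃_{j=0}^{uK} β^j ∪ (⋃_{j=0}^{uK} t_j/β^j)²`. -/
def bstar : Set (A × A) :=
  {p | ∃ j ≤ O.u * O.K, p ∈ O.bj j} ∪
    {p | (∃ j ≤ O.u * O.K, p.1 ∈ O.tcls j) ∧ (∃ j ≤ O.u * O.K, p.2 ∈ O.tcls j)}

/-- The `θ`-class of `c`. -/
def cls (_O : OvII A) (θ : Set (A × A)) (c : A) : Set A := {x | (c, x) ∈ θ}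

/-- For `c ∈ B 0` with `β`-class `C_r = c/β`, this is `⋃_{ℓ ∈ T n} C_r^ℓ`. -/
def wing (n : ℕ) (c : A) : Set A := ⋃ ℓ ∈ O.T n, O.π ℓ '' O.cls O.β c

/-- `β̃ = β⋆ ∪ ⋃_{r=1}^{m-1} ⋃_{n=1}^{N} (⋃_{ℓ ∈ 𝒯_n} C_r^ℓ)²`, where the classes of
`β` other than the class of `a 1` are parametrized by their elements `c`. -/
def btilde : Set (A × A) :=
  O.bstar ∪
    {p | ∃ n, 1 ≤ n ∧ n ≤ O.N ∧ ∃ c ∈ O.B 0, (c, O.a 1) ∉ O.β ∧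
      p.1 ∈ O.wing n c ∧ p.2 ∈ O.wing n c}

end OvII

end Overalg

/-!
`β̃` is the set of pairs `(x, y)` with `(e_i x, e_i y) ∈ β^i` for every `i`. Indeed, each
retraction `e_i` either acts as `S_{j,i}` on a block or on a wing, or sends it into the tie-class
of `B_i`; conversely a pair outside a common block that survives all the `e_i` must lie in a
tie-class or in a wing. In this form `β̃` is plainly an equivalence relation, compatible with
`F_A` because every basic operation factors through some `e_i`. If `θ` is a congruence with
`θ ∩ B² = β`, the operation `q_{i,0}` carries each pair of `θ` into `θ ∩ B² = β`, so
`(e_i x, e_i y) ∈ β^i` for all `i`, that is, `θ ⊆ β̃`.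
-/

theorem Nat.add_one_mod_eq_ite {j K : ℕ} (hK : 1 < K) :
    (j + 1) % K = if j % K = K - 1 then 0 else j % K + 1 := by
  have h1 : 1 % K = 1 := Nat.mod_eq_of_lt hK
  have h2 := Nat.mod_lt j (by omega : 0 < K)
  rw [Nat.add_mod_eq_ite, h1]
  split_ifs <;> omega

namespace Overalg

namespace OvII

variable {A : Type*} (O : OvII A)

lemma mod_lt (j : ℕ) : j % O.K < O.K := Nat.mod_lt j (Nat.zero_lt_of_lt O.hK)

lemma β_subset : O.β ⊆ O.B 0 ×ˢ O.B 0 := O.hβ.1.1.1.1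

lemma mem_B_zero_of_β {p q : A} (h : (p, q) ∈ O.β) : p ∈ O.B 0 ∧ q ∈ O.B 0 :=
  O.β_subset h

lemma β_refl {c : A} (hc : c ∈ O.B 0) : (c, c) ∈ O.β := O.hβ.1.1.1.2.1 c hc

lemma β_symm {p q : A} (h : (p, q) ∈ O.β) : (q, p) ∈ O.β := O.hβ.1.1.1.2.2.1 p q h

lemma β_trans {p q r : A} (h : (p, q) ∈ O.β) (h' : (q, r) ∈ O.β) : (p, r) ∈ O.β :=
  O.hβ.1.1.1.2.2.2 p q r h h'

lemma β_map {f : A → A} (hf : f ∈ O.F) {p q : A} (h : (p, q) ∈ O.β) :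
    (f p, f q) ∈ O.β :=
  O.hβ.1.1.2 f hf (p, q) h

lemma a_one_mem : O.a 1 ∈ O.B 0 := (O.hab 1 le_rfl (by have := O.hK; omega)).1

lemma π_mem {j : ℕ} (hj : j ≤ O.u * O.K) {c : A} (hc : c ∈ O.B 0) : O.π j c ∈ O.B j :=
  (O.hπ j hj).mapsTo hc

lemma exists_π_eq {j : ℕ} (hj : j ≤ O.u * O.K) {x : A} (hx : x ∈ O.B j) :
    ∃ c ∈ O.B 0, O.π j c = x :=
  (O.hπ j hj).surjOn hx

def tieBase (j : ℕ) : A := O.a (if j % O.K = 0 then 1 else j % O.K)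

/-- The point of `B` whose copy in `B j` is shared with `B (j + 1)`. -/
def rtieBase (j : ℕ) : A := if j % O.K = 0 then O.a 1 else O.b (j % O.K)

lemma tie_eq (j : ℕ) : O.tie j = O.π j (O.tieBase j) := rfl

lemma tieBase_mem (j : ℕ) : O.tieBase j ∈ O.B 0 := by
  unfold tieBase
  split_ifs with h
  · exact O.a_one_mem
  · exact (O.hab _ (by omega) (by have := O.mod_lt j; omega)).1

lemma tieBase_of_mod_eq_zero {j : ℕ} (h : j % O.K = 0) : O.tieBase j = O.a 1 := by
  rw [tieBase, if_pos h]

lemma tie_of_mod_eq_zero {j : ℕ} (h : j % O.K = 0) : O.tie j = O.π j (O.a 1) := by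
  rw [tie_eq, O.tieBase_of_mod_eq_zero h]

lemma tieBase_rtieBase_mem_β (j : ℕ) : (O.tieBase j, O.rtieBase j) ∈ O.β := by
  unfold tieBase rtieBase
  split_ifs with h
  · exact O.β_refl O.a_one_mem
  · exact O.hβ.1.2 _ (by omega) (by have := O.mod_lt j; omega)

lemma π_mem_bj {j : ℕ} {p q : A} (h : (p, q) ∈ O.β) : (O.π j p, O.π j q) ∈ O.bj j :=
  ⟨(p, q), h, rfl⟩

lemma exists_of_mem_bj {j : ℕ} {x y : A} (h : (x, y) ∈ O.bj j) :
    ∃ p q, (p, q) ∈ O.β ∧ x = O.π j p ∧ y = O.π j q := by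
  obtain ⟨⟨p, q⟩, hpq, heq⟩ := h
  exact ⟨p, q, hpq, congrArg Prod.fst heq, congrArg Prod.snd heq⟩

lemma π_mem_bj_iff {j : ℕ} (hj : j ≤ O.u * O.K) {p q : A} (hp : p ∈ O.B 0)
    (hq : q ∈ O.B 0) : (O.π j p, O.π j q) ∈ O.bj j ↔ (p, q) ∈ O.β := by
  refine ⟨fun h => ?_, O.π_mem_bj⟩
  obtain ⟨p', q', hpq', hp', hq'⟩ := O.exists_of_mem_bj h
  obtain ⟨hp'B, hq'B⟩ := O.mem_B_zero_of_β hpq'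
  rwa [(O.hπ j hj).injOn hp hp'B hp', (O.hπ j hj).injOn hq hq'B hq']

lemma bj_zero : O.bj 0 = O.β := by
  ext ⟨x, y⟩
  simp only [bj, O.hπ0, Set.mem_ofPred_eq]
  exact ⟨fun ⟨_, h, e⟩ => e ▸ h, fun h => ⟨_, h, rfl⟩⟩

lemma bj_refl {j : ℕ} (hj : j ≤ O.u * O.K) {x : A} (hx : x ∈ O.B j) : (x, x) ∈ O.bj j := by
  obtain ⟨c, hc, rfl⟩ := O.exists_π_eq hj hx
  exact O.π_mem_bj (O.β_refl hc)

lemma bj_symm {j : ℕ} {x y : A} (h : (x, y) ∈ O.bj j) : (y, x) ∈ O.bj j := by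
  obtain ⟨p, q, hpq, rfl, rfl⟩ := O.exists_of_mem_bj h
  exact O.π_mem_bj (O.β_symm hpq)

lemma bj_trans {j : ℕ} (hj : j ≤ O.u * O.K) {x y z : A} (h : (x, y) ∈ O.bj j)
    (h' : (y, z) ∈ O.bj j) : (x, z) ∈ O.bj j := by
  obtain ⟨p, q, hpq, rfl, rfl⟩ := O.exists_of_mem_bj h
  obtain ⟨q', r, hqr, hq', rfl⟩ := O.exists_of_mem_bj h'
  have hq : q = q' := (O.hπ j hj).injOn (O.mem_B_zero_of_β hpq).2 (O.mem_B_zero_of_β hqr).1 hq'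
  exact O.π_mem_bj (O.β_trans hpq (hq ▸ hqr))

lemma σ_mem_β {i : ℕ} (hi : i ≤ O.u * O.K) {x y : A} (h : (x, y) ∈ O.bj i) :
    (O.σ i x, O.σ i y) ∈ O.β := by
  obtain ⟨p, q, hpq, rfl, rfl⟩ := O.exists_of_mem_bj h
  obtain ⟨hp, hq⟩ := O.mem_B_zero_of_β hpq
  rwa [O.hσ i hi p hp, O.hσ i hi q hq]

lemma tie_mem_tcls (j : ℕ) : O.tie j ∈ O.tcls j := O.π_mem_bj (O.β_refl (O.tieBase_mem j))

lemma π_mem_tcls {j : ℕ} {c : A} (h : (O.tieBase j, c) ∈ O.β) : O.π j c ∈ O.tcls j :=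
  O.π_mem_bj h

lemma π_rtieBase_mem_tcls (j : ℕ) : O.π j (O.rtieBase j) ∈ O.tcls j :=
  O.π_mem_tcls (O.tieBase_rtieBase_mem_β j)

lemma tcls_subset {j : ℕ} (hj : j ≤ O.u * O.K) : O.tcls j ⊆ O.B j := fun x hx => by
  obtain ⟨p, q, hpq, -, rfl⟩ := O.exists_of_mem_bj hx
  exact O.π_mem hj (O.mem_B_zero_of_β hpq).2

lemma mem_tcls_of_bj {j : ℕ} (hj : j ≤ O.u * O.K) {x y : A} (h : (x, y) ∈ O.bj j)
    (hy : y ∈ O.tcls j) : x ∈ O.tcls j :=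
  O.bj_trans hj hy (O.bj_symm h)

lemma bj_of_mem_tcls {j : ℕ} (hj : j ≤ O.u * O.K) {x y : A} (hx : x ∈ O.tcls j)
    (hy : y ∈ O.tcls j) : (x, y) ∈ O.bj j :=
  O.bj_trans hj (O.bj_symm hx) hy

lemma B_inter_succ {j : ℕ} (hj : j < O.u * O.K) :
    O.B j ∩ O.B (j + 1) = {O.π j (O.rtieBase j)} ∧
      O.π j (O.rtieBase j) = O.tie (j + 1) := by
  have hsucc := Nat.add_one_mod_eq_ite (j := j) O.hK
  have hlt := O.mod_lt j
  have hK := O.hK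
  rw [tie_eq, tieBase, rtieBase]
  by_cases h0 : j % O.K = 0
  · have h1 : (j + 1) % O.K = 1 := by rw [hsucc, if_neg (by omega), h0]
    rw [if_pos h0, h1, if_neg one_ne_zero]
    exact O.hadj0 j hj h0
  by_cases hl : j % O.K = O.K - 1
  · have h1 : (j + 1) % O.K = 0 := by rw [hsucc, if_pos hl]
    rw [if_neg h0, h1, if_pos rfl, hl]
    exact hl ▸ O.hadjl j hj hl
  · have h1 : (j + 1) % O.K = j % O.K + 1 := by rw [hsucc, if_neg hl]
    rw [if_neg h0, h1, if_neg (Nat.succ_ne_zero _)]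
    exact O.hadjm j hj (by omega) (by omega)

lemma B_inter_add_two {j : ℕ} (hj : j + 2 ≤ O.u * O.K) (hm : (j + 1) % O.K = 0) :
    O.B j ∩ O.B (j + 2) = {O.π j (O.rtieBase j)} ∧
      O.π j (O.rtieBase j) = O.tie (j + 2) := by
  have hl : j % O.K = O.K - 1 := by
    have := Nat.add_one_mod_eq_ite (j := j) O.hK
    split_ifs at this with h <;> omega
  have hr : O.π j (O.rtieBase j) = O.π (j + 1) (O.a 1) := by
    rw [rtieBase, if_neg (by have := O.hK; omega), hl]
    exact (O.hadjl j (by omega) hl).2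
  have hr' := (O.B_inter_succ (j := j + 1) (by omega)).2
  rw [rtieBase, if_pos hm] at hr'
  refine ⟨?_, hr.trans hr'⟩
  have htriple := O.htriple (j + 1) (by omega) (by omega) hm
  rwa [Nat.add_sub_cancel, ← hr] at htriple

lemma mem_B_inter_of_lt {i j : ℕ} (hij : i < j) (hj : j ≤ O.u * O.K) {x : A}
    (hxi : x ∈ O.B i) (hxj : x ∈ O.B j) : x = O.π i (O.rtieBase i) ∧ x = O.tie j := by
  have hx : ∀ {s : Set A}, O.B i ∩ O.B j = s → x ∈ s := fun hs => hs ▸ ⟨hxi, hxj⟩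
  obtain rfl | hne := eq_or_ne j (i + 1)
  · obtain ⟨hinter, htie⟩ := O.B_inter_succ (j := i) (by omega)
    exact ⟨hx hinter, (hx hinter).trans htie⟩
  by_cases h2 : j = i + 2 ∧ (i + 1) % O.K = 0
  · obtain ⟨rfl, hm⟩ := h2
    obtain ⟨hinter, htie⟩ := O.B_inter_add_two hj hm
    exact ⟨hx hinter, (hx hinter).trans htie⟩
  · exact absurd (hx (O.hempty i j (by omega) hj (by omega) h2)) (Set.notMem_empty x)

lemma mem_B_inter {i j : ℕ} (hi : i ≤ O.u * O.K) (hj : j ≤ O.u * O.K) (hij : i ≠ j) {x : A}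
    (hxi : x ∈ O.B i) (hxj : x ∈ O.B j) : x = O.π i (O.rtieBase i) ∨ x = O.tie i := by
  rcases hij.lt_or_gt with h | h
  · exact Or.inl (O.mem_B_inter_of_lt h hj hxi hxj).1
  · exact Or.inr (O.mem_B_inter_of_lt h hi hxj hxi).2

lemma mem_tcls_of_mem_B {i j : ℕ} (hi : i ≤ O.u * O.K) (hj : j ≤ O.u * O.K) (hij : i ≠ j)
    {x : A} (hxi : x ∈ O.B i) (hxj : x ∈ O.B j) : x ∈ O.tcls i := by
  rcases O.mem_B_inter hi hj hij hxi hxj with rfl | rfl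
  · exact O.π_rtieBase_mem_tcls i
  · exact O.tie_mem_tcls i

lemma eq_tie_of_mem_B {i j : ℕ} (hi : i ≤ O.u * O.K) (hj : j ≤ O.u * O.K) (hij : i ≠ j)
    {x : A} (hxi : x ∈ O.B i) (hxj : x ∈ O.B j) (hm : i % O.K = 0) : x = O.tie i := by
  rcases O.mem_B_inter hi hj hij hxi hxj with rfl | rfl
  · rw [rtieBase, if_pos hm, O.tie_of_mod_eq_zero hm]
  · rfl

lemma mem_T {n : ℕ} (hn1 : 1 ≤ n) (hn2 : n ≤ O.N) {ℓ : ℕ} (hℓ : ℓ ∈ O.T n) :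
    ℓ ≤ O.u * O.K ∧ ℓ % O.K = 0 := by
  obtain ⟨h, hdvd⟩ := O.hT1 n hn1 hn2 hℓ
  exact ⟨h, Nat.mod_eq_zero_of_dvd hdvd⟩

lemma exists_mem_T {j : ℕ} (hj : j ≤ O.u * O.K) (hm : j % O.K = 0) :
    ∃ n, 1 ≤ n ∧ n ≤ O.N ∧ j ∈ O.T n :=
  (O.hT2 j hj (Nat.dvd_of_mod_eq_zero hm)).exists

lemma eq_of_mem_T {n n' : ℕ} (hn1 : 1 ≤ n) (hn2 : n ≤ O.N) (hn1' : 1 ≤ n') (hn2' : n' ≤ O.N)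
    {ℓ : ℕ} (hℓ : ℓ ∈ O.T n) (hℓ' : ℓ ∈ O.T n') : n = n' := by
  obtain ⟨hu, hm⟩ := O.mem_T hn1 hn2 hℓ
  exact (O.hT2 ℓ hu (Nat.dvd_of_mod_eq_zero hm)).unique ⟨hn1, hn2, hℓ⟩ ⟨hn1', hn2', hℓ'⟩

lemma mem_wing {n : ℕ} {c x : A} :
    x ∈ O.wing n c ↔ ∃ ℓ ∈ O.T n, ∃ p, (c, p) ∈ O.β ∧ O.π ℓ p = x := by
  simp only [wing, cls, Set.mem_iUnion, Set.mem_image, Set.mem_ofPred_eq, exists_prop]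

lemma e_self {j : ℕ} (hj : j ≤ O.u * O.K) {x : A} (hx : x ∈ O.B j) : O.e j x = x := by
  by_cases hm : j % O.K = 0
  · obtain ⟨n, hn1, hn2, hjn⟩ := O.exists_mem_T hj hm
    obtain ⟨c, hc, rfl⟩ := O.exists_π_eq hj hx
    exact O.heK1 n hn1 hn2 j hjn j hjn c hc
  · exact O.heM1 j hj hm x hx

lemma e_eq_of_not_mem_T {n : ℕ} (hn1 : 1 ≤ n) (hn2 : n ≤ O.N) {ℓ : ℕ} (hℓ : ℓ ∈ O.T n)
    {j : ℕ} (hj : j ≤ O.u * O.K) (hjn : j ∉ O.T n) {x : A} (hx : x ∈ O.B j) :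
    O.e ℓ x = O.π ℓ (O.a 1) := by
  by_cases h : ∃ j' ∈ O.T n, x ∈ O.B j'
  · obtain ⟨j', hj'n, hxj'⟩ := h
    obtain ⟨hj', hm⟩ := O.mem_T hn1 hn2 hj'n
    rw [O.eq_tie_of_mem_B hj' hj (ne_of_mem_of_not_mem hj'n hjn) hxj' hx hm,
      O.tie_of_mod_eq_zero hm]
    exact O.heK1 n hn1 hn2 ℓ hℓ j' hj'n _ O.a_one_mem
  · push Not at h
    exact O.heK2 n hn1 hn2 ℓ hℓ x h

lemma e_mem_tcls {i : ℕ} (hi : i ≤ O.u * O.K) (hm : i % O.K ≠ 0) {j : ℕ}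
    (hj : j ≤ O.u * O.K) (hji : j ≠ i) {x : A} (hx : x ∈ O.B j) : O.e i x ∈ O.tcls i := by
  by_cases hxi : x ∈ O.B i
  · rw [O.heM1 i hi hm x hxi]
    exact O.mem_tcls_of_mem_B hi hj hji.symm hxi hx
  rcases hji.lt_or_gt with h | h
  · rw [O.heM2 i hi hm j h x hx hxi]
    simpa only [tie_eq, tieBase, if_neg hm] using O.tie_mem_tcls i
  · rw [O.heM3 i hi hm j h hj x hx hxi]
    simpa only [rtieBase, if_neg hm] using O.π_rtieBase_mem_tcls i

lemma e_mem_B {i : ℕ} (hi : i ≤ O.u * O.K) (x : A) : O.e i x ∈ O.B i := by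
  obtain ⟨j, hj, hx⟩ := O.hA x
  by_cases hm : i % O.K = 0
  · obtain ⟨n, hn1, hn2, hin⟩ := O.exists_mem_T hi hm
    by_cases hjn : j ∈ O.T n
    · obtain ⟨c, hc, rfl⟩ := O.exists_π_eq hj hx
      rw [O.heK1 n hn1 hn2 i hin j hjn c hc]
      exact O.π_mem hi hc
    · rw [O.e_eq_of_not_mem_T hn1 hn2 hin hj hjn hx]
      exact O.π_mem hi O.a_one_mem
  · obtain rfl | hji := eq_or_ne j i
    · rwa [O.e_self hj hx]
    · exact O.tcls_subset hi (O.e_mem_tcls hi hm hj hji hx)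

lemma e_tie_mem_tcls {i j : ℕ} (hi : i ≤ O.u * O.K) (hj : j ≤ O.u * O.K) :
    O.e i (O.tie j) ∈ O.tcls i := by
  have htj : O.tie j ∈ O.B j := O.π_mem hj (O.tieBase_mem j)
  by_cases hm : i % O.K = 0
  · obtain ⟨n, hn1, hn2, hin⟩ := O.exists_mem_T hi hm
    suffices O.e i (O.tie j) = O.tie i from this ▸ O.tie_mem_tcls i
    rw [O.tie_of_mod_eq_zero hm]
    by_cases hjn : j ∈ O.T n
    · rw [O.tie_of_mod_eq_zero (O.mem_T hn1 hn2 hjn).2]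
      exact O.heK1 n hn1 hn2 i hin j hjn _ O.a_one_mem
    · exact O.e_eq_of_not_mem_T hn1 hn2 hin hj hjn htj
  · obtain rfl | hji := eq_or_ne j i
    · rw [O.e_self hj htj]
      exact O.tie_mem_tcls j
    · exact O.e_mem_tcls hi hm hj hji htj

lemma e_mem_bj_of_mem_bj {i j : ℕ} (hi : i ≤ O.u * O.K) (hj : j ≤ O.u * O.K) {x y : A}
    (h : (x, y) ∈ O.bj j) : (O.e i x, O.e i y) ∈ O.bj i := by
  obtain ⟨p, q, hpq, rfl, rfl⟩ := O.exists_of_mem_bj h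
  obtain ⟨hp, hq⟩ := O.mem_B_zero_of_β hpq
  by_cases hm : i % O.K = 0
  · obtain ⟨n, hn1, hn2, hin⟩ := O.exists_mem_T hi hm
    by_cases hjn : j ∈ O.T n
    · rw [O.heK1 n hn1 hn2 i hin j hjn p hp, O.heK1 n hn1 hn2 i hin j hjn q hq]
      exact O.π_mem_bj hpq
    · rw [O.e_eq_of_not_mem_T hn1 hn2 hin hj hjn (O.π_mem hj hp),
        O.e_eq_of_not_mem_T hn1 hn2 hin hj hjn (O.π_mem hj hq)]
      exact O.π_mem_bj (O.β_refl O.a_one_mem)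
  · obtain rfl | hji := eq_or_ne j i
    · rw [O.e_self hj (O.π_mem hj hp), O.e_self hj (O.π_mem hj hq)]
      exact O.π_mem_bj hpq
    · exact O.bj_of_mem_tcls hi (O.e_mem_tcls hi hm hj hji (O.π_mem hj hp))
        (O.e_mem_tcls hi hm hj hji (O.π_mem hj hq))

lemma e_mem_tcls_of_mem_tcls {i j : ℕ} (hi : i ≤ O.u * O.K) (hj : j ≤ O.u * O.K) {z : A}
    (hz : z ∈ O.tcls j) : O.e i z ∈ O.tcls i :=
  O.bj_trans hi (O.e_tie_mem_tcls hi hj) (O.e_mem_bj_of_mem_bj hi hj hz)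

lemma e_mem_bj_of_mem_wing {i : ℕ} (hi : i ≤ O.u * O.K) {n : ℕ} (hn1 : 1 ≤ n)
    (hn2 : n ≤ O.N) {c x y : A} (hx : x ∈ O.wing n c) (hy : y ∈ O.wing n c) :
    (O.e i x, O.e i y) ∈ O.bj i := by
  obtain ⟨ℓ, hℓ, p, hcp, rfl⟩ := O.mem_wing.mp hx
  obtain ⟨ℓ', hℓ', q, hcq, rfl⟩ := O.mem_wing.mp hy
  have hpq : (p, q) ∈ O.β := O.β_trans (O.β_symm hcp) hcq
  obtain ⟨hp, hq⟩ := O.mem_B_zero_of_β hpq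
  obtain ⟨hℓu, hℓm⟩ := O.mem_T hn1 hn2 hℓ
  obtain ⟨hℓu', hℓm'⟩ := O.mem_T hn1 hn2 hℓ'
  by_cases hm : i % O.K = 0
  · obtain ⟨n', hn1', hn2', hin'⟩ := O.exists_mem_T hi hm
    obtain rfl | hnn' := eq_or_ne n n'
    · rw [O.heK1 n hn1 hn2 i hin' ℓ hℓ p hp, O.heK1 n hn1 hn2 i hin' ℓ' hℓ' q hq]
      exact O.π_mem_bj hpq
    · have hout : ∀ {k}, k ∈ O.T n → k ∉ O.T n' := fun hk hk' =>
        hnn' (O.eq_of_mem_T hn1 hn2 hn1' hn2' hk hk')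
      rw [O.e_eq_of_not_mem_T hn1' hn2' hin' hℓu (hout hℓ) (O.π_mem hℓu hp),
        O.e_eq_of_not_mem_T hn1' hn2' hin' hℓu' (hout hℓ') (O.π_mem hℓu' hq)]
      exact O.π_mem_bj (O.β_refl O.a_one_mem)
  · exact O.bj_of_mem_tcls hi
      (O.e_mem_tcls hi hm hℓu (fun h => hm (h ▸ hℓm)) (O.π_mem hℓu hp))
      (O.e_mem_tcls hi hm hℓu' (fun h => hm (h ▸ hℓm')) (O.π_mem hℓu' hq))

def retractRel : Set (A × A) :=
  {p | ∀ i ≤ O.u * O.K, (O.e i p.1, O.e i p.2) ∈ O.bj i}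

lemma isEquivRel_retractRel : IsEquivRel O.retractRel :=
  ⟨fun x _ hi => O.bj_refl hi (O.e_mem_B hi x), fun _ _ h i hi => O.bj_symm (h i hi),
    fun _ _ _ h h' i hi => O.bj_trans hi (h i hi) (h' i hi)⟩

lemma btilde_subset_retractRel : O.btilde ⊆ O.retractRel := by
  rintro ⟨x, y⟩ h i hi
  rcases h with (⟨j, hj, h⟩ | ⟨⟨j, hj, hx⟩, j', hj', hy⟩) | ⟨n, hn1, hn2, c, -, -, hx, hy⟩
  · exact O.e_mem_bj_of_mem_bj hi hj h
  · exact O.bj_of_mem_tcls hi (O.e_mem_tcls_of_mem_tcls hi hj hx)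
      (O.e_mem_tcls_of_mem_tcls hi hj' hy)
  · exact O.e_mem_bj_of_mem_wing hi hn1 hn2 hx hy

lemma mem_btilde_of_bj {j : ℕ} (hj : j ≤ O.u * O.K) {p : A × A} (h : p ∈ O.bj j) :
    p ∈ O.btilde :=
  Or.inl (Or.inl ⟨j, hj, h⟩)

lemma β_subset_btilde : O.β ⊆ O.btilde := fun _ h =>
  O.mem_btilde_of_bj (Nat.zero_le _) (O.bj_zero ▸ h)

lemma btilde_symm {x y : A} (h : (x, y) ∈ O.btilde) : (y, x) ∈ O.btilde := by
  rcases h with (⟨j, hj, h⟩ | ⟨hx, hy⟩) | ⟨n, hn1, hn2, c, hc, hca, hx, hy⟩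
  · exact O.mem_btilde_of_bj hj (O.bj_symm h)
  · exact Or.inl (Or.inr ⟨hy, hx⟩)
  · exact Or.inr ⟨n, hn1, hn2, c, hc, hca, hy, hx⟩

/-- For `y ∉ B j`, `e_j y` lies in the tie-class of `B j`, unless `j` and the block of `y` lie
in the same part of `𝒯`; in that case `x` is outside the tie-class only if `x`, `y` share a wing. -/
lemma mem_tcls_or_mem_btilde {j : ℕ} (hj : j ≤ O.u * O.K) {x y : A} (hx : x ∈ O.B j)
    (hyj : y ∉ O.B j) (h : (O.e j x, O.e j y) ∈ O.bj j) : x ∈ O.tcls j ∨ (x, y) ∈ O.btilde := by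
  rw [O.e_self hj hx] at h
  obtain ⟨j', hj', hy⟩ := O.hA y
  by_cases hm : j % O.K = 0
  · obtain ⟨n, hn1, hn2, hjn⟩ := O.exists_mem_T hj hm
    obtain ⟨cx, hcx, rfl⟩ := O.exists_π_eq hj hx
    by_cases hj'n : j' ∈ O.T n
    · obtain ⟨cy, hcy, rfl⟩ := O.exists_π_eq hj' hy
      rw [O.heK1 n hn1 hn2 j hjn j' hj'n cy hcy, O.π_mem_bj_iff hj hcx hcy] at h
      by_cases hca : (cx, O.a 1) ∈ O.β
      · left
        exact O.π_mem_tcls (by rw [O.tieBase_of_mod_eq_zero hm]; exact O.β_symm hca)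
      · exact Or.inr (Or.inr ⟨n, hn1, hn2, cx, hcx, hca,
          O.mem_wing.mpr ⟨j, hjn, cx, O.β_refl hcx, rfl⟩, O.mem_wing.mpr ⟨j', hj'n, cy, h, rfl⟩⟩)
    · rw [O.e_eq_of_not_mem_T hn1 hn2 hjn hj' hj'n hy, ← O.tie_of_mod_eq_zero hm] at h
      exact Or.inl (O.mem_tcls_of_bj hj h (O.tie_mem_tcls j))
  · have hj'j : j' ≠ j := fun e => hyj (e ▸ hy)
    exact Or.inl (O.mem_tcls_of_bj hj h (O.e_mem_tcls hj hm hj' hj'j hy))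

lemma retractRel_subset_btilde : O.retractRel ⊆ O.btilde := by
  rintro ⟨x, y⟩ h
  have hcommon : ∀ i ≤ O.u * O.K, x ∈ O.B i → y ∈ O.B i → (x, y) ∈ O.btilde :=
    fun i hi hx hy => O.mem_btilde_of_bj hi (O.e_self hi hx ▸ O.e_self hi hy ▸ h i hi)
  obtain ⟨j, hj, hx⟩ := O.hA x
  obtain ⟨j', hj', hy⟩ := O.hA y
  by_cases hyj : y ∈ O.B j
  · exact hcommon j hj hx hyj
  by_cases hxj' : x ∈ O.B j'
  · exact hcommon j' hj' hxj' hy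
  rcases O.mem_tcls_or_mem_btilde hj hx hyj (h j hj) with hxt | hxy
  · rcases O.mem_tcls_or_mem_btilde hj' hy hxj' (O.bj_symm (h j' hj')) with hyt | hyx
    · exact Or.inl (Or.inr ⟨⟨j, hj, hxt⟩, j', hj', hyt⟩)
    · exact O.btilde_symm hyx
  · exact hxy

lemma btilde_eq_retractRel : O.btilde = O.retractRel :=
  O.btilde_subset_retractRel.antisymm O.retractRel_subset_btilde

lemma map_mem_btilde {g : A → A} (hg : g ∈ O.FA) {x y : A} (h : (x, y) ∈ O.btilde) :
    (g x, g y) ∈ O.btilde := by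
  have he := O.btilde_subset_retractRel h
  have he0 : (O.e 0 x, O.e 0 y) ∈ O.β := O.bj_zero ▸ he 0 (Nat.zero_le _)
  rcases hg with (⟨f, hf, rfl⟩ | ⟨i, hi, rfl⟩) | ⟨j, -, hj, rfl⟩
  · exact O.β_subset_btilde (O.β_map hf he0)
  · exact O.β_subset_btilde (O.σ_mem_β hi (he i hi))
  · exact O.mem_btilde_of_bj hj (O.π_mem_bj he0)

lemma isCon_btilde : IsCon O.FA O.btilde :=
  ⟨O.btilde_eq_retractRel ▸ O.isEquivRel_retractRel, fun _ hg _ hp => O.map_mem_btilde hg hp⟩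

lemma btilde_inter_B_zero : O.btilde ∩ (O.B 0 ×ˢ O.B 0) = O.β := by
  refine Set.Subset.antisymm ?_ fun p h => ⟨O.β_subset_btilde h, O.β_subset h⟩
  rintro ⟨x, y⟩ ⟨h, hx, hy⟩
  have h0 := O.btilde_subset_retractRel h 0 (Nat.zero_le _)
  rwa [O.e_self (Nat.zero_le _) hx, O.e_self (Nat.zero_le _) hy, O.bj_zero] at h0

lemma subset_retractRel {θ : Set (A × A)} (hθ : IsCon O.FA θ)
    (htr : θ ∩ (O.B 0 ×ˢ O.B 0) = O.β) : θ ⊆ O.retractRel := by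
  rintro ⟨x, y⟩ hxy i hi
  obtain ⟨c, hc, hcx⟩ := O.exists_π_eq hi (O.e_mem_B hi x)
  obtain ⟨d, hd, hdy⟩ := O.exists_π_eq hi (O.e_mem_B hi y)
  have hq := hθ.2 (O.qi0 i) (Or.inl (Or.inr ⟨i, hi, rfl⟩)) (x, y) hxy
  simp only [qi0, ← hcx, ← hdy, O.hσ i hi c hc, O.hσ i hi d hd] at hq
  rw [← hcx, ← hdy]
  exact O.π_mem_bj (htr ▸ ⟨hq, hc, hd⟩)

end OvII

end Overalg

open Overalg OvII in
/-- In an overalgebra `𝐀` of the second type, with the classes of `β` other than that of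
`a 1` parametrized by their elements, the relation
`β̃ = β⋆ ∪ ⋃_{r=1}^{m-1} ⋃_{n=1}^{N} (⋃_{ℓ∈𝒯_n} C_r^ℓ)²` is a congruence of `𝐀`, and it
is the largest congruence `θ` of `𝐀` with `θ ∩ (B×B) = β` (that is, `β̃ = β̂`). -/
theorem btildeII_isGreatest {A : Type*} (O : OvII A) :
    IsCon O.FA O.btilde ∧
    IsGreatest {θ : Set (A × A) | IsCon O.FA θ ∧ θ ∩ (O.B 0 ×ˢ O.B 0) = O.β}
      O.btilde :=
  ⟨O.isCon_btilde, ⟨O.isCon_btilde, O.btilde_inter_B_zero⟩, fun _ ⟨hθ, htr⟩ =>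
    O.btilde_eq_retractRel ▸ O.subset_retractRel hθ htr⟩
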